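/- arXiv:math/9901057 — 3 statements merged into one kernel-verified Lean document; each statement's English description precedes it below -/
import Mathlib

section
/- For any nonnegative integer vector s = (s_1,…,s_d), the polynomial P_s(t) := (-1)^{s_1+⋯+s_d} det[(C(t_q, p-1-s_q))_{1≤p,q≤d}] satisfies P_s(t) = (1/(1!⋯(d-1)!)) ∑_{0≤k≤s} (-1)^{|k|} C(s_1,k_1)⋯C(s_d,k_d) V(t+k), where the sum is over integer vectors k with 0 ≤ k_q ≤ s_q, |k| = k_1+⋯+k_d, and V(u) = ∏_{p>q}(u_p - u_q). -/
/-- The binomial coefficient `C(t, k)` for integer arguments, with the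
convention `C(t, k) = 0` for `k < 0`. -/
noncomputable def intChoose (t k : ℤ) : ℚ :=
  if 0 ≤ k then (∏ m ∈ Finset.range k.toNat, ((t : ℚ) - m)) / (Nat.factorial k.toNat) else 0

/-- `P_s(t) = (-1)^{|s|} det[(C(t_q, p-1-s_q))]`, `p, q` running over `1, …, d`. -/
noncomputable def Ps {d : ℕ} (s : Fin d → ℕ) (t : Fin d → ℤ) : ℚ :=
  (-1 : ℚ) ^ (∑ q, s q) *
    Matrix.det (Matrix.of fun p q : Fin d => intChoose (t q) (((p : ℕ) : ℤ) - (s q : ℤ)))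

open Finset Polynomial

lemma intChoose_of_neg {t k : ℤ} (h : k < 0) : intChoose t k = 0 := by
  simp [intChoose, not_le.2 h]

lemma intChoose_natCast (t : ℤ) (n : ℕ) :
    intChoose t (n : ℤ) = (∏ m ∈ range n, ((t : ℚ) - m)) / (Nat.factorial n) := by
  simp [intChoose]

lemma intChoose_pascal (t n : ℤ) :
    intChoose (t + 1) n - intChoose t n = intChoose t (n - 1) := by
  rcases lt_trichotomy n 0 with h | h | h
  · rw [intChoose_of_neg h, intChoose_of_neg h, intChoose_of_neg (by omega)]; ring
  · subst h
    simp [intChoose]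
  · obtain ⟨m, rfl⟩ : ∃ m : ℕ, n = (m : ℤ) + 1 := ⟨(n - 1).toNat, by omega⟩
    have hm1 : ((m : ℤ) + 1) = ((m + 1 : ℕ) : ℤ) := by push_cast; ring
    have hm0 : ((m + 1 : ℕ) : ℤ) - 1 = ((m : ℕ) : ℤ) := by push_cast; ring
    rw [hm1, hm0, intChoose_natCast, intChoose_natCast, intChoose_natCast]
    have h1 : ∏ j ∈ range (m + 1), (((t + 1 : ℤ) : ℚ) - j)
        = ((t : ℚ) + 1) * ∏ j ∈ range m, ((t : ℚ) - j) := by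
      rw [Finset.prod_range_succ']
      push_cast
      simp only [show ∀ j : ℕ, (t : ℚ) + 1 - (j + 1) = (t : ℚ) - j from fun j => by ring]
      ring
    have h2 : ∏ j ∈ range (m + 1), ((t : ℚ) - j)
        = (∏ j ∈ range m, ((t : ℚ) - j)) * ((t : ℚ) - m) := Finset.prod_range_succ _ _
    rw [h1, h2, Nat.factorial_succ]
    have hf : ((m.factorial : ℚ)) ≠ 0 := Nat.cast_ne_zero.mpr (Nat.factorial_ne_zero m)
    have hf1 : ((m : ℚ) + 1) ≠ 0 := by positivity
    field_simp
    push_cast; ring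

lemma sum_choose_rec (g : ℕ → ℚ) (s : ℕ) :
    ∑ k ∈ range (s + 2), (-1 : ℚ) ^ k * ((s + 1).choose k) * g k
      = (∑ k ∈ range (s + 1), (-1 : ℚ) ^ k * (s.choose k) * g k)
        - ∑ k ∈ range (s + 1), (-1 : ℚ) ^ k * (s.choose k) * g (k + 1) := by
  have hR : ∑ k ∈ range (s + 1), (-1 : ℚ) ^ k * (s.choose k) * g k
      = (∑ k ∈ range s, (-1 : ℚ) ^ (k + 1) * ((s.choose (k + 1) : ℕ) : ℚ) * g (k + 1)) + g 0 := by
    rw [Finset.sum_range_succ' _ s]; simp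
  rw [Finset.sum_range_succ' _ (s + 1)]
  have key : ∀ k, (-1 : ℚ) ^ (k + 1) * (((s + 1).choose (k + 1) : ℕ) : ℚ) * g (k + 1)
      = ((-1 : ℚ) ^ (k + 1) * ((s.choose (k + 1) : ℕ) : ℚ) * g (k + 1))
        - (-1 : ℚ) ^ k * ((s.choose k : ℕ) : ℚ) * g (k + 1) := by
    intro k
    have h : (((s + 1).choose (k + 1) : ℕ) : ℚ)
        = ((s.choose k : ℕ) : ℚ) + ((s.choose (k + 1) : ℕ) : ℚ) := by
      rw [Nat.choose_succ_succ]; push_cast; ring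
    rw [h]; ring
  simp only [key]
  rw [Finset.sum_sub_distrib]
  have h0 : ∑ k ∈ range (s + 1), (-1 : ℚ) ^ (k + 1) * ((s.choose (k + 1) : ℕ) : ℚ) * g (k + 1)
      = ∑ k ∈ range s, (-1 : ℚ) ^ (k + 1) * ((s.choose (k + 1) : ℕ) : ℚ) * g (k + 1) := by
    rw [Finset.sum_range_succ, Nat.choose_succ_self]; simp
  rw [h0, hR]
  simp only [pow_zero, Nat.choose_zero_right, Nat.cast_one, one_mul]
  ring

lemma intChoose_sub (s : ℕ) (m : ℤ) : ∀ t : ℤ,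
    ∑ k ∈ range (s + 1), (-1 : ℚ) ^ k * (s.choose k) * intChoose (t + k) m
      = (-1 : ℚ) ^ s * intChoose t (m - s) := by
  induction s with
  | zero => intro t; simp
  | succ s ih =>
    intro t
    rw [show s + 1 + 1 = s + 2 from rfl,
      sum_choose_rec (fun k => intChoose (t + k) m) s]
    have h2 : ∑ k ∈ range (s + 1),
          (-1 : ℚ) ^ k * (s.choose k) * intChoose (t + ((k + 1 : ℕ) : ℤ)) m
        = ∑ k ∈ range (s + 1), (-1 : ℚ) ^ k * (s.choose k) * intChoose ((t + 1) + k) m := by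
      refine Finset.sum_congr rfl fun k _ => ?_
      congr 2
      push_cast; ring
    rw [h2, ih t, ih (t + 1)]
    have := intChoose_pascal t (m - s)
    have hms : m - ((s + 1 : ℕ) : ℤ) = m - (s : ℤ) - 1 := by push_cast; ring
    rw [hms]
    linear_combination (-1 : ℚ) ^ (s + 1) * this

lemma descPochhammer_eval_prod (n : ℕ) (x : ℚ) :
    (descPochhammer ℚ n).eval x = ∏ m ∈ range n, (x - m) := by
  induction n with
  | zero => simp
  | succ n ih => rw [descPochhammer_succ_eval, ih, Finset.prod_range_succ]

lemma intChoose_eq_eval (t : ℤ) (n : ℕ) :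
    intChoose t (n : ℤ) = (descPochhammer ℚ n).eval (t : ℚ) / (Nat.factorial n) := by
  simp [intChoose, descPochhammer_eval_prod]

lemma det_intChoose {d : ℕ} (u : Fin d → ℤ) :
    Matrix.det (Matrix.of fun q p : Fin d => intChoose (u q) ((p : ℕ) : ℤ))
      = (∏ m ∈ range d, ((Nat.factorial m : ℕ) : ℚ))⁻¹ *
        ∏ i : Fin d, ∏ j ∈ Finset.Ioi i, ((u j : ℚ) - (u i : ℚ)) := by
  have h2 : Matrix.det (Matrix.of fun q p : Fin d =>
        (descPochhammer ℚ (p : ℕ)).eval ((u q : ℚ)))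
      = ∏ i : Fin d, ∏ j ∈ Finset.Ioi i, ((u j : ℚ) - (u i : ℚ)) := by
    rw [← Matrix.det_eval_matrixOfPolynomials_eq_det_vandermonde (fun i => ((u i : ℚ)))
        (fun p : Fin d => descPochhammer ℚ (p : ℕ))
        (fun i => descPochhammer_natDegree (R := ℚ) (i : ℕ))
        (fun i => monic_descPochhammer ℚ (i : ℕ)),
      Matrix.det_vandermonde]
  have h1 : (Matrix.of fun q p : Fin d => intChoose (u q) ((p : ℕ) : ℤ))
      = Matrix.of (fun q p : Fin d => (fun p : Fin d => ((Nat.factorial (p : ℕ) : ℕ) : ℚ)⁻¹) p *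
          (Matrix.of fun q p : Fin d => (descPochhammer ℚ (p : ℕ)).eval ((u q : ℚ))) q p) := by
    ext q p
    simp only [Matrix.of_apply, intChoose_eq_eval]
    rw [div_eq_inv_mul, mul_comm]
  rw [h1, Matrix.det_mul_row, h2]
  congr 1
  rw [← Finset.prod_inv_distrib,
    ← Fin.prod_univ_eq_prod_range (fun m => ((Nat.factorial m : ℚ))⁻¹) d]

lemma prod_pairs {M : Type*} [CommMonoid M] {d : ℕ} (f : Fin d → Fin d → M) :
    (∏ i : Fin d, ∏ j ∈ Finset.Ioi i, f j i)
      = ∏ pq ∈ Finset.univ.filter (fun pq : Fin d × Fin d => pq.2 < pq.1), f pq.1 pq.2 := by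
  rw [Finset.prod_sigma']
  refine Finset.prod_bij (fun x _ => (x.2, x.1)) ?_ ?_ ?_ ?_
  · intro x hx
    simp only [Finset.mem_sigma, Finset.mem_Ioi] at hx
    simp [hx.2]
  · intro a ha b hb h
    obtain ⟨a1, a2⟩ := a; obtain ⟨b1, b2⟩ := b
    simp only [Prod.mk.injEq] at h
    obtain ⟨h1, h2⟩ := h
    subst h1; subst h2; rfl
  · intro pq hpq
    simp only [Finset.mem_filter] at hpq
    exact ⟨⟨pq.2, pq.1⟩, by simp [Finset.mem_sigma, Finset.mem_Ioi, hpq.2], rfl⟩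
  · intro x hx; rfl

theorem Ps_eq_sum_vandermonde {d : ℕ} (s : Fin d → ℕ) (t : Fin d → ℤ) :
    Ps s t = (∏ m ∈ Finset.range d, (Nat.factorial m : ℚ))⁻¹ *
      ∑ k ∈ Fintype.piFinset (fun q => Finset.range (s q + 1)),
        (-1 : ℚ) ^ (∑ q, k q) * (∏ q, ((s q).choose (k q) : ℚ)) *
          ∏ pq ∈ Finset.univ.filter (fun pq : Fin d × Fin d => pq.2 < pq.1),
            (((t pq.1 + k pq.1) - (t pq.2 + k pq.2) : ℤ) : ℚ) := by
  have step1 : Ps s t = Matrix.det (Matrix.of fun p q : Fin d =>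
      ∑ k ∈ range (s q + 1),
        (-1 : ℚ) ^ k * ((s q).choose k : ℚ) * intChoose (t q + k) ((p : ℕ) : ℤ)) := by
    rw [Ps, ← Finset.prod_pow_eq_pow_sum,
      ← Matrix.det_mul_row (fun q => (-1 : ℚ) ^ (s q))]
    congr 1
    ext p q
    simp only [Matrix.of_apply]
    rw [← intChoose_sub (s q) ((p : ℕ) : ℤ) (t q)]
  have step2 : Matrix.det (Matrix.of fun p q : Fin d =>
        ∑ k ∈ range (s q + 1),
          (-1 : ℚ) ^ k * ((s q).choose k : ℚ) * intChoose (t q + k) ((p : ℕ) : ℤ))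
      = ∑ r ∈ Fintype.piFinset (fun q => Finset.range (s q + 1)),
          Matrix.det (Matrix.of fun q p : Fin d =>
            (-1 : ℚ) ^ (r q) * ((s q).choose (r q) : ℚ) *
              intChoose (t q + r q) ((p : ℕ) : ℤ)) := by
    rw [← Matrix.det_transpose]
    have hT : (Matrix.of fun p q : Fin d =>
          ∑ k ∈ range (s q + 1),
            (-1 : ℚ) ^ k * ((s q).choose k : ℚ) * intChoose (t q + k) ((p : ℕ) : ℤ)).transpose
        = fun q : Fin d => ∑ k ∈ range (s q + 1),
            (fun p : Fin d =>
              (-1 : ℚ) ^ k * ((s q).choose k : ℚ) * intChoose (t q + k) ((p : ℕ) : ℤ)) := by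
      ext q p
      simp [Finset.sum_apply]
    rw [hT]
    exact (Matrix.detRowAlternating).toMultilinearMap.map_sum_finset
      (fun q k => fun p : Fin d =>
        (-1 : ℚ) ^ k * ((s q).choose k : ℚ) * intChoose (t q + k) ((p : ℕ) : ℤ))
      (fun q => Finset.range (s q + 1))
  have step3 : ∀ r : Fin d → ℕ, Matrix.det (Matrix.of fun q p : Fin d =>
        (-1 : ℚ) ^ (r q) * ((s q).choose (r q) : ℚ) * intChoose (t q + r q) ((p : ℕ) : ℤ))
      = (-1 : ℚ) ^ (∑ q, r q) * (∏ q, ((s q).choose (r q) : ℚ)) *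
          ((∏ m ∈ range d, (Nat.factorial m : ℚ))⁻¹ *
            ∏ i : Fin d, ∏ j ∈ Finset.Ioi i,
              (((t j + (r j : ℤ)) : ℚ) - ((t i + (r i : ℤ)) : ℚ))) := by
    intro r
    set A := Matrix.of fun q p : Fin d => intChoose (t q + r q) ((p : ℕ) : ℤ) with hA
    have h : (Matrix.of fun q p : Fin d =>
          (-1 : ℚ) ^ (r q) * ((s q).choose (r q) : ℚ) * intChoose (t q + r q) ((p : ℕ) : ℤ))
        = Matrix.of (fun q p : Fin d =>
            (fun q => (-1 : ℚ) ^ (r q) * ((s q).choose (r q) : ℚ)) q * A q p) := rfl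
    rw [h, Matrix.det_mul_column, hA, det_intChoose (fun q => t q + r q)]
    rw [Finset.prod_mul_distrib, Finset.prod_pow_eq_pow_sum]
    push_cast
    ring
  rw [step1, step2, Finset.mul_sum]
  refine Finset.sum_congr rfl fun r _ => ?_
  rw [step3 r]
  rw [prod_pairs (fun a b : Fin d => ((t a + (r a : ℤ)) : ℚ) - ((t b + (r b : ℤ)) : ℚ))]
  have hc : ∀ pq : Fin d × Fin d,
      (((t pq.1 + (r pq.1 : ℤ)) - (t pq.2 + (r pq.2 : ℤ)) : ℤ) : ℚ)
        = ((t pq.1 + (r pq.1 : ℤ)) : ℚ) - ((t pq.2 + (r pq.2 : ℤ)) : ℚ) := by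
    intro pq; push_cast; ring
  rw [Finset.prod_congr rfl fun pq _ => hc pq]
  ring
end

section
/- The Vandermonde polynomial V(t) = ∏_{1≤q<p≤d}(t_p - t_q) satisfies the partial difference equation (Δ_1 + ⋯ + Δ_d) V = 0, where Δ_q P(t) = P(t) - P(t - e_q) and e_q is the q-th unit vector. -/
/-- The Vandermonde product `V(t) = ∏_{q < p} (t_p - t_q)`. -/
def vandermonde {d : ℕ} (t : Fin d → ℚ) : ℚ :=
  ∏ pq ∈ Finset.univ.filter (fun pq : Fin d × Fin d => pq.2 < pq.1), (t pq.1 - t pq.2)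

/-- rising factorial-ish `g j x = (x+1)⋯(x+j)` -/
def gg (j : ℕ) (x : ℚ) : ℚ := ∏ i ∈ Finset.range j, (x + i + 1)

lemma gg_succ (j : ℕ) (x : ℚ) : gg (j+1) x = gg j x * (x + j + 1) :=
  Finset.prod_range_succ _ _

lemma gg_succ_sub_one (j : ℕ) (x : ℚ) : gg (j+1) (x-1) = x * gg j x := by
  have : gg (j+1) (x-1) = ∏ i ∈ Finset.range (j+1), (x + i) := by
    unfold gg; apply Finset.prod_congr rfl; intro i _; push_cast; ring
  rw [this, Finset.prod_range_succ']
  simp only [Nat.cast_zero, add_zero]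
  rw [mul_comm]
  congr 1
  unfold gg
  apply Finset.prod_congr rfl; intro i _; push_cast; ring

lemma gg_delta (j : ℕ) (x : ℚ) : gg (j+1) x - gg (j+1) (x-1) = (j+1) * gg j x := by
  rw [gg_succ, gg_succ_sub_one]; ring

lemma vandermonde_eq_det_vandermonde {d : ℕ} (t : Fin d → ℚ) :
    _root_.vandermonde t = (Matrix.vandermonde t).det := by
  rw [Matrix.det_vandermonde, Finset.prod_sigma']
  unfold _root_.vandermonde
  apply Finset.prod_bij' (fun pq _ => (⟨pq.2, pq.1⟩ : Σ _ : Fin d, Fin d))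
    (fun x _ => ((x.2, x.1) : Fin d × Fin d))
  · intro pq hpq
    simp only [Finset.mem_filter, Finset.mem_univ, true_and] at hpq
    simp [Finset.mem_Ioi, hpq]
  · intro x hx
    simp only [Finset.mem_sigma, Finset.mem_Ioi, Finset.mem_univ, true_and] at hx
    simp [hx]
  · intros; rfl
  · intros; rfl
  · intros; rfl

/-- the matrix with entries `g_j(t_q)` -/
def MM {d : ℕ} (t : Fin d → ℚ) : Matrix (Fin d) (Fin d) ℚ :=
  Matrix.of fun q j => gg (j : ℕ) (t q)

lemma vandermonde_eq_det_MM {d : ℕ} (t : Fin d → ℚ) :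
    _root_.vandermonde t = (MM t).det := by
  rw [_root_.vandermonde_eq_det_vandermonde]
  have := Matrix.det_eval_matrixOfPolynomials_eq_det_vandermonde t
    (fun j : Fin d => ∏ i ∈ Finset.range (j : ℕ), (Polynomial.X + Polynomial.C ((i : ℚ) + 1)))
    (fun j => by
      rw [Polynomial.natDegree_prod_of_monic _ _ (fun i _ => Polynomial.monic_X_add_C _)]
      have h1 : ∀ i ∈ Finset.range (j:ℕ), (Polynomial.X + Polynomial.C ((i:ℚ) + 1)).natDegree = 1 :=
        fun i _ => Polynomial.natDegree_X_add_C _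
      rw [Finset.sum_congr rfl h1]
      simp)
    (fun j => Polynomial.monic_prod_of_monic _ _ (fun i _ => Polynomial.monic_X_add_C _))
  rw [this]
  congr 1
  ext q j
  simp only [MM, gg, Matrix.of_apply, Polynomial.eval_prod, Polynomial.eval_add,
    Polynomial.eval_X, Polynomial.eval_C]
  apply Finset.prod_congr rfl; intro i _; push_cast; ring

/-- strictly upper shift matrix -/
def shiftM (d : ℕ) : Matrix (Fin d) (Fin d) ℚ :=
  Matrix.of fun k j => if (k : ℕ) + 1 = (j : ℕ) then (j : ℚ) else 0

lemma row_eq {d : ℕ} (t : Fin d → ℚ) (q : Fin d) :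
    (fun j => MM t q j - gg (j : ℕ) (t q - 1)) = (MM t * shiftM d) q := by
  funext j
  rw [Matrix.mul_apply]
  rcases hj : (j : ℕ) with _ | m
  · have : ∀ k : Fin d, MM t q k * shiftM d k j = 0 := by
      intro k; simp [shiftM, hj]
    rw [Finset.sum_congr rfl (fun k _ => this k)]
    simp [MM, gg, hj]
  · have hm : m < d := by omega
    rw [Finset.sum_eq_single (⟨m, hm⟩ : Fin d)]
    · simp only [MM, shiftM, Matrix.of_apply, hj]
      norm_num [gg_delta]
      ring
    · intro k _ hk
      simp only [shiftM, Matrix.of_apply]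
      rw [if_neg, mul_zero]
      intro h
      apply hk
      apply Fin.ext
      simp; omega
    · intro h; exact absurd (Finset.mem_univ _) h

/-- The Vandermonde polynomial satisfies `(Δ_1 + ⋯ + Δ_d) V = 0`, where
`Δ_q P(t) = P(t) - P(t - e_q)`. -/
theorem vandermonde_difference_eq_zero {d : ℕ} (t : Fin d → ℚ) :
    ∑ q : Fin d, (vandermonde t - vandermonde (Function.update t q (t q - 1))) = 0 := by
  have hupd : ∀ q : Fin d, _root_.vandermonde (Function.update t q (t q - 1)) =
      ((MM t).updateRow q (fun j => gg (j : ℕ) (t q - 1))).det := by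
    intro q
    rw [vandermonde_eq_det_MM]
    congr 1
    ext q' j
    rcases eq_or_ne q' q with rfl | h
    · simp [MM, Matrix.updateRow_apply, Function.update]
    · simp [MM, Matrix.updateRow_apply, Function.update, h]
  have hterm : ∀ q : Fin d, _root_.vandermonde t -
      _root_.vandermonde (Function.update t q (t q - 1)) =
      ((MM t).updateRow q ((MM t * shiftM d) q)).det := by
    intro q
    rw [hupd q, vandermonde_eq_det_MM, ← row_eq]
    have := Matrix.det_updateRow_add (MM t) q
      (fun j => MM t q j - gg (j : ℕ) (t q - 1)) (fun j => gg (j : ℕ) (t q - 1))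
    have h2 : ((fun j => MM t q j - gg (j : ℕ) (t q - 1)) + fun j : Fin d => gg (j : ℕ) (t q - 1))
        = MM t q := by funext j; simp
    rw [h2, Matrix.updateRow_eq_self] at this
    linarith
  calc ∑ q : Fin d, (_root_.vandermonde t - _root_.vandermonde (Function.update t q (t q - 1)))
      = ∑ q : Fin d, ((MM t).updateRow q ((MM t * shiftM d) q)).det := by
        exact Finset.sum_congr rfl fun q _ => hterm q
    _ = ∑ q : Fin d, ∑ j : Fin d, (MM t * shiftM d) q j * (MM t).adjugate j q := by
        apply Finset.sum_congr rfl
        intro q _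
        rw [← Matrix.cramer_transpose_apply, Matrix.cramer_eq_adjugate_mulVec,
          ← Matrix.adjugate_transpose]
        simp [Matrix.mulVec, dotProduct, Matrix.transpose_apply, mul_comm]
    _ = Matrix.trace ((MM t * shiftM d) * (MM t).adjugate) := by
        simp [Matrix.trace, Matrix.diag, Matrix.mul_apply]
    _ = Matrix.trace ((MM t).adjugate * MM t * shiftM d) := by
        rw [Matrix.trace_mul_cycle]
    _ = 0 := by
        rw [Matrix.adjugate_mul, Matrix.smul_mul, Matrix.one_mul, Matrix.trace_smul]
        have : Matrix.trace (shiftM d) = 0 := by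
          simp [Matrix.trace, Matrix.diag, shiftM]
        rw [this, smul_zero]
end

section
/- A polynomial P ∈ ℚ[t_1,…,t_d] satisfies (Δ_1 + ⋯ + Δ_d)P = 0 if and only if P = φ(Q) for some Q in the ℚ-subalgebra of ℚ[y_1,…,y_d] generated by the differences y_p - y_q (1 ≤ p, q ≤ d), where φ is the isomorphism sending ∏ y_q^{n_q} to ∏ t_q(t_q+1)⋯(t_q+n_q-1). -/
open MvPolynomial

/-- The partial difference operator `Δ_q P(t) = P(t) - P(t - e_q)` on polynomials. -/
noncomputable def delta {d : ℕ} (q : Fin d) (P : MvPolynomial (Fin d) ℚ) :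
    MvPolynomial (Fin d) ℚ :=
  P - MvPolynomial.aeval (fun i => if i = q then X i - 1 else X i) P

/-- The linear map `φ` sending `∏ y_q^{n_q}` to `∏ t_q (t_q+1) ⋯ (t_q+n_q-1)`. -/
noncomputable def phi {d : ℕ} (P : MvPolynomial (Fin d) ℚ) : MvPolynomial (Fin d) ℚ :=
  ∑ m ∈ P.support, MvPolynomial.C (P.coeff m) *
    ∏ q, ∏ r ∈ Finset.range (m q), (X q + MvPolynomial.C (r : ℚ))

section Aux

open Finset

variable {d : ℕ}

noncomputable def fm (m : Fin d →₀ ℕ) : MvPolynomial (Fin d) ℚ :=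
  ∏ q, ∏ r ∈ Finset.range (m q), (X q + MvPolynomial.C (r : ℚ))

lemma phi_def' (P : MvPolynomial (Fin d) ℚ) :
    phi P = ∑ m ∈ P.support, MvPolynomial.C (P.coeff m) * fm m := rfl

lemma delta_def' (q : Fin d) (P : MvPolynomial (Fin d) ℚ) :
    delta q P = P - MvPolynomial.aeval (fun i => if i = q then X i - 1 else X i) P := rfl

lemma phi_zero : phi (0 : MvPolynomial (Fin d) ℚ) = 0 := by simp [phi_def']

lemma phi_monomial (m : Fin d →₀ ℕ) (c : ℚ) :
    phi (monomial m c) = C c * fm m := by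
  rcases eq_or_ne c 0 with rfl | hc
  · simp [phi_def']
  · rw [phi_def']
    rw [support_monomial, if_neg hc, Finset.sum_singleton, coeff_monomial, if_pos rfl]

lemma phi_eq_on (P : MvPolynomial (Fin d) ℚ) (s : Finset (Fin d →₀ ℕ))
    (hs : P.support ⊆ s) : phi P = ∑ m ∈ s, C (P.coeff m) * fm m := by
  rw [phi_def']
  exact Finset.sum_subset hs (fun m _ hm => by
    rw [MvPolynomial.notMem_support_iff.mp hm]; simp)

lemma phi_add (P Q : MvPolynomial (Fin d) ℚ) : phi (P + Q) = phi P + phi Q := by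
  classical
  rw [phi_eq_on (P + Q) (P.support ∪ Q.support) (MvPolynomial.support_add),
      phi_eq_on P (P.support ∪ Q.support) Finset.subset_union_left,
      phi_eq_on Q (P.support ∪ Q.support) Finset.subset_union_right,
      ← Finset.sum_add_distrib]
  refine Finset.sum_congr rfl fun m _ => ?_
  rw [coeff_add, C_add]; ring

lemma phi_neg (P : MvPolynomial (Fin d) ℚ) : phi (-P) = - phi P := by
  have h := phi_add P (-P)
  rw [add_neg_cancel, phi_zero] at h
  exact eq_neg_of_add_eq_zero_right h.symm

lemma phi_sub (P Q : MvPolynomial (Fin d) ℚ) : phi (P - Q) = phi P - phi Q := by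
  rw [sub_eq_add_neg, phi_add, phi_neg, sub_eq_add_neg]

lemma phi_sum {ι : Type*} (s : Finset ι) (g : ι → MvPolynomial (Fin d) ℚ) :
    phi (∑ i ∈ s, g i) = ∑ i ∈ s, phi (g i) := by
  classical
  induction s using Finset.induction_on with
  | empty => simp [phi_zero]
  | insert a s h ih => rw [Finset.sum_insert h, Finset.sum_insert h, phi_add, ih]

lemma totalDegree_fm_le (m : Fin d →₀ ℕ) :
    (fm m).totalDegree ≤ m.sum fun _ n => n := by
  refine le_trans (totalDegree_finset_prod _ _) ?_
  rw [Finsupp.sum_fintype _ _ (fun _ => rfl)]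
  refine Finset.sum_le_sum fun q _ => ?_
  refine le_trans (totalDegree_finset_prod _ _) ?_
  calc ∑ r ∈ Finset.range (m q), (X q + C (r : ℚ) : MvPolynomial (Fin d) ℚ).totalDegree
      ≤ ∑ r ∈ Finset.range (m q), 1 := by
        refine Finset.sum_le_sum fun r _ => ?_
        refine le_trans (totalDegree_add _ _) ?_
        rw [totalDegree_X, totalDegree_C]
        simp
    _ = m q := by simp

lemma fm_add_single (m : Fin d →₀ ℕ) (q : Fin d) :
    fm (m + Finsupp.single q 1) = fm m * (X q + C ((m q : ℚ))) := by
  classical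
  unfold fm
  have e1 := Finset.mul_prod_erase Finset.univ
        (fun q' => ∏ r ∈ Finset.range ((m + Finsupp.single q 1 : Fin d →₀ ℕ) q'), (X q' + C (r : ℚ) : MvPolynomial (Fin d) ℚ))
        (Finset.mem_univ q)
  have e2 := Finset.mul_prod_erase Finset.univ
        (fun q' => ∏ r ∈ Finset.range (m q'), (X q' + C (r : ℚ) : MvPolynomial (Fin d) ℚ))
        (Finset.mem_univ q)
  rw [← e1, ← e2]
  beta_reduce
  have h1 : (m + Finsupp.single q 1 : Fin d →₀ ℕ) q = m q + 1 := by simp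
  have h2 : ∀ q' ∈ Finset.univ.erase q,
      (∏ r ∈ Finset.range ((m + Finsupp.single q 1 : Fin d →₀ ℕ) q'), (X q' + C (r : ℚ)))
        = ∏ r ∈ Finset.range (m q'), (X q' + C (r : ℚ)) := by
    intro q' hq'
    have hne : q' ≠ q := Finset.ne_of_mem_erase hq'
    rw [Finsupp.add_apply, Finsupp.single_apply, if_neg (Ne.symm hne), add_zero]
  rw [h1, Finset.prod_range_succ, Finset.prod_congr rfl h2]
  ring

lemma fm_key : ∀ (N : ℕ) (m : Fin d →₀ ℕ), (m.sum fun _ n => n) = N →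
    fm m - monomial m 1 = 0 ∨ (fm m - monomial m 1).totalDegree < N := by
  intro N
  induction N with
  | zero =>
    intro m hm
    left
    have hm0 : m = 0 := by
      ext q
      have := Finsupp.sum_fintype (f := m) (fun _ n => n) ?_ |>.symm.trans hm
      · have h2 : m q = 0 := by
          by_contra hq
          have : 0 < ∑ q' : Fin d, m q' :=
            Finset.sum_pos' (fun _ _ => Nat.zero_le _)
              ⟨q, Finset.mem_univ q, Nat.pos_of_ne_zero hq⟩
          omega
        simpa using h2
      · intro; rfl
    subst hm0
    simp [fm, monomial_zero', C_1]
  | succ N ih =>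
    intro m hm
    right
    have hm0 : m ≠ 0 := by
      rintro rfl; simp at hm
    obtain ⟨q, hq⟩ : ∃ q, m q ≠ 0 := by
      by_contra h
      push_neg at h
      exact hm0 (Finsupp.ext h)
    set m' := m - Finsupp.single q 1 with hm'def
    have hdecomp : m = m' + Finsupp.single q 1 := by
      ext q'
      rw [Finsupp.add_apply, hm'def, Finsupp.tsub_apply, Finsupp.single_apply]
      by_cases h : q = q'
      · subst h; simp; omega
      · simp [h]
    have hsum' : (m'.sum fun _ n => n) = N := by
      have h1 : (m.sum fun _ n => n) = (m'.sum fun _ n => n) + ((Finsupp.single q 1).sum fun _ n => n) := by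
        rw [hdecomp]
        exact Finsupp.sum_add_index' (fun _ => rfl) (fun _ _ _ => rfl)
      rw [Finsupp.sum_single_index rfl] at h1
      omega
    rw [hdecomp, fm_add_single]
    have hmono : (monomial (m' + Finsupp.single q 1) (1 : ℚ) : MvPolynomial (Fin d) ℚ)
        = monomial m' 1 * X q := by
      rw [X, monomial_mul, mul_one]
    rw [hmono]
    have hrw : fm m' * (X q + C ((m' q : ℚ))) - monomial m' 1 * X q
        = (fm m' - monomial m' 1) * X q + fm m' * C ((m' q : ℚ)) := by ring
    rw [hrw]
    refine lt_of_le_of_lt (totalDegree_add _ _) ?_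
    rw [Nat.max_lt]
    constructor
    · rcases ih m' hsum' with h | h
      · rw [h, zero_mul]
        simp
      · refine lt_of_le_of_lt (totalDegree_mul _ _) ?_
        rw [totalDegree_X]
        omega
    · refine lt_of_le_of_lt (totalDegree_mul _ _) ?_
      rw [totalDegree_C]
      have h2 := totalDegree_fm_le m'
      omega

lemma phi_sub_self (P : MvPolynomial (Fin d) ℚ) :
    phi P - P = 0 ∨ (phi P - P).totalDegree < P.totalDegree := by
  classical
  have hrw : phi P - P = ∑ m ∈ P.support, C (P.coeff m) * (fm m - monomial m 1) := by
    calc phi P - P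
        = (∑ m ∈ P.support, C (P.coeff m) * fm m) - ∑ m ∈ P.support, monomial m (P.coeff m) := by
          rw [phi_def', ← P.as_sum]
      _ = ∑ m ∈ P.support, (C (P.coeff m) * fm m - monomial m (P.coeff m)) := by
          rw [Finset.sum_sub_distrib]
      _ = ∑ m ∈ P.support, C (P.coeff m) * (fm m - monomial m 1) := by
          refine Finset.sum_congr rfl fun m _ => ?_
          rw [mul_sub, C_mul_monomial, mul_one]
  by_cases hP : P.totalDegree = 0
  · left
    rw [hrw]
    refine Finset.sum_eq_zero fun m hm => ?_
    have hm0 : (m.sum fun _ n => n) = 0 :=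
      Nat.le_antisymm (hP ▸ le_totalDegree hm) (Nat.zero_le _)
    rcases fm_key 0 m hm0 with h | h
    · rw [h, mul_zero]
    · exact absurd h (Nat.not_lt_zero _)
  · right
    rw [hrw]
    refine lt_of_le_of_lt (totalDegree_finset_sum _ _) ?_
    rw [Finset.sup_lt_iff (show (⊥ : ℕ) < P.totalDegree from Nat.pos_of_ne_zero hP)]
    intro m hm
    rcases fm_key _ m rfl with h | h
    · rw [h, mul_zero]
      simpa using Nat.pos_of_ne_zero hP
    · refine lt_of_le_of_lt (totalDegree_mul _ _) ?_
      rw [totalDegree_C]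
      have h2 : (m.sum fun _ n => n) ≤ P.totalDegree := le_totalDegree hm
      omega

lemma phi_surj : ∀ (N : ℕ) (P : MvPolynomial (Fin d) ℚ), P.totalDegree ≤ N →
    ∃ Q, phi Q = P := by
  intro N
  induction N with
  | zero =>
    intro P hP
    refine ⟨P, ?_⟩
    rcases phi_sub_self P with h | h
    · exact sub_eq_zero.mp h
    · omega
  | succ N ih =>
    intro P hP
    rcases phi_sub_self P with h | h
    · exact ⟨P, sub_eq_zero.mp h⟩
    · obtain ⟨Q', hQ'⟩ := ih (phi P - P) (by omega)
      refine ⟨P - Q', ?_⟩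
      rw [phi_sub, hQ']
      ring

lemma phi_inj0 (Q : MvPolynomial (Fin d) ℚ) (h : phi Q = 0) : Q = 0 := by
  rcases phi_sub_self Q with h2 | h2
  · have := sub_eq_zero.mp h2
    rw [← this, h]
  · rw [h, zero_sub, totalDegree_neg] at h2
    exact absurd h2 (lt_irrefl _)

lemma delta_add (q : Fin d) (a b : MvPolynomial (Fin d) ℚ) :
    delta q (a + b) = delta q a + delta q b := by
  simp only [delta_def', map_add]
  ring

noncomputable def fmA (q : Fin d) (m : Fin d →₀ ℕ) : MvPolynomial (Fin d) ℚ :=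
  ∏ q' ∈ Finset.univ.erase q, ∏ r ∈ Finset.range (m q'), (X q' + C (r : ℚ))

lemma fm_split (q : Fin d) (m : Fin d →₀ ℕ) :
    fm m = (∏ r ∈ Finset.range (m q), (X q + C (r : ℚ))) * fmA q m := by
  have e := Finset.mul_prod_erase Finset.univ
    (fun q' => ∏ r ∈ Finset.range (m q'), (X q' + C (r : ℚ) : MvPolynomial (Fin d) ℚ))
    (Finset.mem_univ q)
  exact e.symm

lemma S_fmA (q : Fin d) (m : Fin d →₀ ℕ) :
    MvPolynomial.aeval (fun i => if i = q then X i - 1 else X i) (fmA q m) = fmA q m := by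
  rw [fmA, map_prod]
  refine Finset.prod_congr rfl fun q' hq' => ?_
  rw [map_prod]
  refine Finset.prod_congr rfl fun r _ => ?_
  have hne : q' ≠ q := Finset.ne_of_mem_erase hq'
  rw [map_add, aeval_X, if_neg hne, aeval_C, MvPolynomial.algebraMap_eq]

lemma S_inner (q : Fin d) (n : ℕ) :
    MvPolynomial.aeval (fun i => if i = q then X i - 1 else X i)
      (∏ r ∈ Finset.range n, (X q + C (r : ℚ)))
    = ∏ r ∈ Finset.range n, (X q - 1 + C (r : ℚ)) := by
  rw [map_prod]
  refine Finset.prod_congr rfl fun r _ => ?_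
  rw [map_add, aeval_X, if_pos rfl, aeval_C, MvPolynomial.algebraMap_eq]

lemma fmA_sub_single (q : Fin d) (m : Fin d →₀ ℕ) :
    fmA q (m - Finsupp.single q 1) = fmA q m := by
  refine Finset.prod_congr rfl fun q' hq' => ?_
  have hne : q' ≠ q := Finset.ne_of_mem_erase hq'
  rw [Finsupp.tsub_apply, Finsupp.single_apply, if_neg (Ne.symm hne), Nat.sub_zero]

lemma delta_phi (q : Fin d) (P : MvPolynomial (Fin d) ℚ) :
    delta q (phi P) = phi (pderiv q P) := by
  induction P using MvPolynomial.induction_on' with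
  | add a b ha hb => rw [phi_add, delta_add, map_add, phi_add, ha, hb]
  | monomial m c =>
    rw [phi_monomial, pderiv_monomial, phi_monomial]
    rw [delta_def', fm_split q m, map_mul, map_mul, aeval_C, MvPolynomial.algebraMap_eq,
        S_fmA, S_inner]
    cases hn : m q with
    | zero =>
      simp
    | succ n' =>
      have hfm' : fm (m - Finsupp.single q 1)
          = (∏ r ∈ Finset.range n', (X q + C (r : ℚ))) * fmA q m := by
        rw [fm_split q (m - Finsupp.single q 1), fmA_sub_single]
        congr 2
        rw [Finsupp.tsub_apply, Finsupp.single_apply, if_pos rfl, hn]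
        norm_num
      rw [hfm']
      have hSB : (∏ r ∈ Finset.range (n' + 1), (X q - 1 + C (r : ℚ) : MvPolynomial (Fin d) ℚ))
          = (∏ r ∈ Finset.range n', (X q + C (r : ℚ))) * (X q - 1) := by
        rw [Finset.prod_range_succ']
        congr 1
        · refine Finset.prod_congr rfl fun r _ => ?_
          push_cast
          rw [map_add, C_1]
          ring
        · simp
      rw [Finset.prod_range_succ, hSB]
      have hC2 : (c * ((n' + 1 : ℕ) : ℚ)) = c * ((n' : ℚ) + 1) := by push_cast; ring
      have hC : (C (c * ((n' : ℚ) + 1)) : MvPolynomial (Fin d) ℚ)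
          = C c * (C (n' : ℚ) + 1) := by
        rw [map_mul, map_add, map_one]
      rw [hC2, hC]
      ring

lemma sub_single_add (m : Fin d →₀ ℕ) (i : Fin d) (h : m i ≠ 0) :
    m - Finsupp.single i 1 + Finsupp.single i 1 = m := by
  ext q'
  rw [Finsupp.add_apply, Finsupp.tsub_apply, Finsupp.single_apply]
  rcases eq_or_ne i q' with rfl | hq
  · rw [if_pos rfl]
    omega
  · rw [if_neg hq]
    omega

lemma coeff_pderiv' (i : Fin d) (P : MvPolynomial (Fin d) ℚ) (k : Fin d →₀ ℕ) :
    coeff k (pderiv i P) = ((k i : ℚ) + 1) * coeff (k + Finsupp.single i 1) P := by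
  induction P using MvPolynomial.induction_on' with
  | add a b ha hb => rw [map_add, coeff_add, coeff_add, ha, hb]; ring
  | monomial m c =>
    rw [pderiv_monomial, coeff_monomial, coeff_monomial]
    by_cases h2 : m = k + Finsupp.single i 1
    · have hmk : m - Finsupp.single i 1 = k := by
        rw [h2]; exact add_tsub_cancel_right k (Finsupp.single i 1)
      have hmi : m i = k i + 1 := by
        rw [h2, Finsupp.add_apply, Finsupp.single_apply, if_pos rfl]
      rw [if_pos hmk, if_pos h2, hmi]
      push_cast
      ring
    · rw [if_neg h2, mul_zero]
      by_cases h1 : m - Finsupp.single i 1 = k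
      · rw [if_pos h1]
        have hmi : m i = 0 := by
          by_contra hmi
          exact h2 (by rw [← h1, sub_single_add m i hmi])
        rw [hmi]
        simp
      · rw [if_neg h1]

lemma support_zero_of_pderiv (i : Fin d) (P : MvPolynomial (Fin d) ℚ)
    (h : pderiv i P = 0) : ∀ m ∈ P.support, m i = 0 := by
  intro m hm
  by_contra hmi
  have hk := coeff_pderiv' i P (m - Finsupp.single i 1)
  rw [h, coeff_zero, sub_single_add m i hmi] at hk
  have hc : coeff m P ≠ 0 := MvPolynomial.mem_support_iff.mp hm
  have hne : ((((m - Finsupp.single i 1 : Fin d →₀ ℕ) i : ℕ) : ℚ) + 1) ≠ 0 := by positivity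
  exact mul_ne_zero hne hc hk.symm

lemma sum_pderiv_X (i : Fin d) :
    (∑ q : Fin d, pderiv q (X i : MvPolynomial (Fin d) ℚ)) = 1 := by
  rw [Finset.sum_eq_single i]
  · exact pderiv_X_self i
  · intro q _ hq
    exact pderiv_X_of_ne (Ne.symm hq)
  · intro h
    exact absurd (Finset.mem_univ i) h

lemma vu_eq (q₀ : Fin d) (P : MvPolynomial (Fin d) ℚ) :
    MvPolynomial.aeval (R := ℚ) ((fun i => if i = q₀ then X i else X i - X q₀) : Fin d → MvPolynomial (Fin d) ℚ)
      (MvPolynomial.aeval (R := ℚ) (fun i => if i = q₀ then X i else X i + X q₀) P) = P := by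
  induction P using MvPolynomial.induction_on with
  | C c => simp [MvPolynomial.algebraMap_eq]
  | add p q hp hq => rw [map_add, map_add, hp, hq]
  | mul_X p i hp =>
    rw [map_mul, map_mul, hp]
    congr 1
    rw [aeval_X]
    by_cases h : i = q₀
    · subst h
      rw [if_pos rfl, aeval_X, if_pos rfl]
    · rw [if_neg h, map_add, aeval_X, aeval_X, if_neg h, if_pos rfl]
      ring

lemma pderiv_aeval_u (q₀ : Fin d) (P : MvPolynomial (Fin d) ℚ) :
    pderiv q₀ (MvPolynomial.aeval (R := ℚ) (fun i => if i = q₀ then X i else X i + X q₀) P)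
      = MvPolynomial.aeval (R := ℚ) ((fun i => if i = q₀ then X i else X i + X q₀) : Fin d → MvPolynomial (Fin d) ℚ)
          (∑ q : Fin d, pderiv q P) := by
  induction P using MvPolynomial.induction_on with
  | C c => simp [pderiv_C, MvPolynomial.algebraMap_eq]
  | add p q hp hq =>
    rw [map_add]
    rw [map_add (pderiv q₀), hp, hq]
    rw [← map_add]
    congr 1
    rw [← Finset.sum_add_distrib]
    refine Finset.sum_congr rfl fun q' _ => ?_
    rw [map_add]
  | mul_X p i hp =>
    have hu1 : pderiv q₀ (if i = q₀ then (X i : MvPolynomial (Fin d) ℚ) else X i + X q₀) = 1 := by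
      by_cases h : i = q₀
      · subst h; rw [if_pos rfl, pderiv_X_self]
      · rw [if_neg h, map_add, pderiv_X_self, pderiv_X_of_ne h, zero_add]
    have hsum : (∑ q : Fin d, pderiv q (p * X i))
        = (∑ q : Fin d, pderiv q p) * X i + p := by
      calc (∑ q : Fin d, pderiv q (p * X i))
          = ∑ q : Fin d, (pderiv q p * X i + p * pderiv q (X i)) := by
            refine Finset.sum_congr rfl fun q' _ => pderiv_mul
        _ = (∑ q : Fin d, pderiv q p) * X i + p * ∑ q : Fin d, pderiv q (X i) := by
            rw [Finset.sum_add_distrib, Finset.sum_mul, Finset.mul_sum]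
        _ = (∑ q : Fin d, pderiv q p) * X i + p := by rw [sum_pderiv_X, mul_one]
    rw [hsum]
    simp only [map_add, map_mul, aeval_X]
    rw [pderiv_mul, hp, hu1, mul_one]

lemma aeval_v_mem (q₀ : Fin d) (W : MvPolynomial (Fin d) ℚ)
    (hW : ∀ m ∈ W.support, m q₀ = 0) :
    MvPolynomial.aeval (R := ℚ) ((fun i => if i = q₀ then X i else X i - X q₀) : Fin d → MvPolynomial (Fin d) ℚ) W ∈
      Algebra.adjoin ℚ {R : MvPolynomial (Fin d) ℚ | ∃ p q : Fin d, R = X p - X q} := by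
  have hsum : MvPolynomial.aeval (R := ℚ) ((fun i => if i = q₀ then X i else X i - X q₀) : Fin d → MvPolynomial (Fin d) ℚ) W
      = ∑ m ∈ W.support, MvPolynomial.aeval (R := ℚ)
          ((fun i => if i = q₀ then X i else X i - X q₀) : Fin d → MvPolynomial (Fin d) ℚ) (monomial m (coeff m W)) := by
    conv_lhs => rw [W.as_sum]
    rw [map_sum]
  rw [hsum]
  refine Subalgebra.sum_mem _ fun m hm => ?_
  rw [aeval_monomial]
  refine Subalgebra.mul_mem _ (Subalgebra.algebraMap_mem _ _) ?_
  rw [Finsupp.prod]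
  refine Subalgebra.prod_mem _ fun i hi => ?_
  have hne : i ≠ q₀ := fun h => (Finsupp.mem_support_iff.mp hi) (h ▸ hW m hm)
  refine Subalgebra.pow_mem _ ?_ _
  beta_reduce
  rw [if_neg hne]
  exact Algebra.subset_adjoin ⟨i, q₀, rfl⟩

lemma mem_adjoin_of_sum_pderiv (Q : MvPolynomial (Fin d) ℚ)
    (h : (∑ q : Fin d, pderiv q Q) = 0) :
    Q ∈ Algebra.adjoin ℚ {R : MvPolynomial (Fin d) ℚ | ∃ p q : Fin d, R = X p - X q} := by
  rcases isEmpty_or_nonempty (Fin d) with he | hne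
  · obtain ⟨c, rfl⟩ := MvPolynomial.C_surjective (Fin d) Q
    rw [← MvPolynomial.algebraMap_eq]
    exact Subalgebra.algebraMap_mem _ c
  · obtain ⟨q₀⟩ := hne
    have h1 : pderiv q₀ (MvPolynomial.aeval (R := ℚ)
        ((fun i => if i = q₀ then X i else X i + X q₀) : Fin d → MvPolynomial (Fin d) ℚ) Q) = 0 := by
      rw [pderiv_aeval_u, h, map_zero]
    have h2 := support_zero_of_pderiv q₀ _ h1
    have h3 := aeval_v_mem q₀ _ h2
    rwa [vu_eq] at h3

lemma sum_pderiv_eq_zero_of_mem (x : MvPolynomial (Fin d) ℚ)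
    (hx : x ∈ Algebra.adjoin ℚ
      {R : MvPolynomial (Fin d) ℚ | ∃ p q : Fin d, R = X p - X q}) :
    (∑ q : Fin d, pderiv q x) = 0 := by
  induction hx using Algebra.adjoin_induction with
  | mem y hy =>
    obtain ⟨p, q', rfl⟩ := hy
    rw [Finset.sum_congr rfl (fun q _ => map_sub (pderiv q) (X p : MvPolynomial (Fin d) ℚ) (X q')),
        Finset.sum_sub_distrib, sum_pderiv_X, sum_pderiv_X, sub_self]
  | algebraMap r =>
    rw [MvPolynomial.algebraMap_eq]
    simp [pderiv_C]
  | add x y hx hy ihx ihy =>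
    rw [Finset.sum_congr rfl (fun q _ => map_add (pderiv q) x y),
        Finset.sum_add_distrib, ihx, ihy, add_zero]
  | mul x y hx hy ihx ihy =>
    calc (∑ q : Fin d, pderiv q (x * y))
        = ∑ q : Fin d, (pderiv q x * y + x * pderiv q y) :=
          Finset.sum_congr rfl fun q _ => pderiv_mul
      _ = (∑ q : Fin d, pderiv q x) * y + x * (∑ q : Fin d, pderiv q y) := by
          rw [Finset.sum_add_distrib, Finset.sum_mul, Finset.mul_sum]
      _ = 0 := by rw [ihx, ihy]; ring

theorem difference_solutions_eq_image_aux (P : MvPolynomial (Fin d) ℚ) :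
    (∑ q : Fin d, delta q P) = 0 ↔
      ∃ Q ∈ Algebra.adjoin ℚ
          {R : MvPolynomial (Fin d) ℚ | ∃ p q : Fin d, R = X p - X q},
        phi Q = P := by
  constructor
  · intro hP
    obtain ⟨Q, hQ⟩ := phi_surj P.totalDegree P le_rfl
    have hDQ : phi (∑ q : Fin d, pderiv q Q) = 0 := by
      rw [phi_sum]
      calc (∑ q : Fin d, phi (pderiv q Q)) = ∑ q : Fin d, delta q P :=
            Finset.sum_congr rfl fun q _ => by rw [← delta_phi, hQ]
        _ = 0 := hP
    have hD0 : (∑ q : Fin d, pderiv q Q) = 0 := phi_inj0 _ hDQ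
    exact ⟨Q, mem_adjoin_of_sum_pderiv Q hD0, hQ⟩
  · rintro ⟨Q, hQA, rfl⟩
    have hD := sum_pderiv_eq_zero_of_mem Q hQA
    calc (∑ q : Fin d, delta q (phi Q)) = ∑ q : Fin d, phi (pderiv q Q) :=
          Finset.sum_congr rfl fun q _ => delta_phi q Q
      _ = phi (∑ q : Fin d, pderiv q Q) := (phi_sum _ _).symm
      _ = 0 := by rw [hD, phi_zero]

end Aux

/-- `(Δ_1 + ⋯ + Δ_d)P = 0` iff `P = φ(Q)` for `Q` in the subalgebra generated by
the differences `y_p - y_q`. -/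
theorem difference_solutions_eq_image {d : ℕ} (P : MvPolynomial (Fin d) ℚ) :
    (∑ q : Fin d, delta q P) = 0 ↔
      ∃ Q ∈ Algebra.adjoin ℚ
          {R : MvPolynomial (Fin d) ℚ | ∃ p q : Fin d, R = X p - X q},
        phi Q = P := by
  exact difference_solutions_eq_image_aux P
end
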